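/- (Two-edge correlation formula.) Let a,b,c > 0, set A = (a−b−c)/(a+b+c), B = (b−a−c)/(a+b+c), C = (c−a−b)/(a+b+c), assume ABC ≠ 0, and let ε_a, ε_b, ε_c ∈ ℂ satisfy ε_b ε_c = A, ε_a ε_c = B, ε_a ε_b = C. Let e and f be distinct edges of E_n, with endpoints u₀, v₀ and x₀, y₀ respectively, such that 1 + ε_e² ≠ 0 and 1 + ε_f² ≠ 0 (where ε_g = ε_s for an edge g of type s). Then Σ_{σ^v ∈ {−1,+1}^{V_n}} W(σ^v) ≠ 0 and the two-edge correlation of the 1-2 model satisfies E_{μ_n}[σ(e)σ(f)] = ( Σ_{σ^v} D_{e,f}(σ^v) W(σ^v) ) / ( Σ_{σ^v} W(σ^v) ), where W(σ^v) = ∏_{g ∈ E_n} (1 + ε_g² σ^v_u σ^v_v) (u, v the endpoints of g) and D_{e,f}(σ^v) = ε_e (σ^v_{u₀} + σ^v_{v₀}) ε_f (σ^v_{x₀} + σ^v_{y₀}) / ((1 + ε_e²)(1 + ε_f²)). -/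

import Mathlib

open MeasureTheory Filter Topology

/-- The three edge types of the hexagonal lattice: `a` (horizontal),
`b` (NW/SE), `c` (NE/SW). -/
inductive EType : Type
  | a : EType
  | b : EType
  | c : EType
deriving DecidableEq

instance : Fintype EType :=
  ⟨{EType.a, EType.b, EType.c}, fun x => by cases x <;> simp⟩

/-- A vertex of the (toroidal or infinite) hexagonal lattice with coordinates in `α`. -/
abbrev HexVtx (α : Type) : Type := (α × α) × Bool

/-- An edge of the hexagonal lattice: its type together with coordinates in `α`. -/
abbrev HexEdge (α : Type) : Type := EType × α × α

/-- The `s`-type edge incident to the vertex `v`. -/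
def edgeAt {α : Type} [Sub α] [One α] (v : HexVtx α) : EType → HexEdge α
  | .a => (.a, v.1)
  | .b => if v.2 then (.b, v.1) else (.b, (v.1.1, v.1.2 - 1))
  | .c => if v.2 then (.c, v.1) else (.c, (v.1.1 - 1, v.1.2))

/-- The two endpoints of an edge. -/
def ends {α : Type} [Add α] [One α] : HexEdge α → HexVtx α × HexVtx α
  | (.a, x, y) => (((x, y), false), ((x, y), true))
  | (.b, x, y) => (((x, y), true), ((x, y + 1), false))
  | (.c, x, y) => (((x, y), true), ((x + 1, y), false))

/-- The 1-2 model vertex weight of a triple of incident edge spins. -/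
def vWt (a b c : ℝ) (sa sb sc : Bool) : ℝ :=
  if sb = sc ∧ sa ≠ sb then a
  else if sa = sc ∧ sb ≠ sa then b
  else if sa = sb ∧ sc ≠ sa then c
  else 0

/-- Vertices of the toroidal lattice `H_n`. -/
abbrev VF (n : ℕ) : Type := HexVtx (ZMod n)

/-- Edges of the toroidal lattice `H_n`. -/
abbrev EF (n : ℕ) : Type := HexEdge (ZMod n)

/-- Spin configurations on the edges of `H_n`; `true` means spin `+1`. -/
abbrev ConfF (n : ℕ) : Type := EF n → Bool

/-- The 1-2 model weight of a configuration on `H_n`. -/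
def confWt (n : ℕ) [NeZero n] (a b c : ℝ) (σ : ConfF n) : ℝ :=
  ∏ v : VF n, vWt a b c (σ (edgeAt v .a)) (σ (edgeAt v .b)) (σ (edgeAt v .c))

/-- The 1-2 model partition function on `H_n`. -/
noncomputable def Zn (n : ℕ) [NeZero n] (a b c : ℝ) : ℝ :=
  ∑ σ : ConfF n, confWt n a b c σ

/-- Vertices of the infinite hexagonal lattice `H`. -/
abbrev VI : Type := HexVtx ℤ

/-- Edges of the infinite hexagonal lattice `H`. -/
abbrev EI : Type := HexEdge ℤ

/-- Configurations on the infinite lattice: the space `Ω = {−1,+1}^𝔼`. -/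
abbrev Config : Type := EI → Bool

/-- Periodic lift of a configuration on `H_n` to the infinite lattice. -/
def liftConf (n : ℕ) (σ : ConfF n) : Config :=
  fun e => σ (e.1, ((e.2.1 : ZMod n), (e.2.2 : ZMod n)))

/-- The pushforward `μ̂_n` on `Ω` of the 1-2 model measure `μ_n` on `H_n`. -/
noncomputable def muHat (n : ℕ) [NeZero n] (a b c : ℝ) : Measure Config :=
  ∑ σ : ConfF n, ENNReal.ofReal (confWt n a b c σ / Zn n a b c) •
    Measure.dirac (liftConf n σ)

/-- `μ` is the weak limit of the sequence `μ̂_n` (tested against all bounded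
continuous functions). -/
def IsWeakLimit (a b c : ℝ) (μ : Measure Config) : Prop :=
  IsProbabilityMeasure μ ∧
    ∀ f : BoundedContinuousFunction Config ℝ,
      Tendsto (fun n : ℕ => ∫ ω, f ω ∂ muHat (n + 1) a b c) atTop (𝓝 (∫ ω, f ω ∂ μ))

/-- The spin value (`±1`) of a Boolean state, as a complex number. -/
def cspin (s : Bool) : ℂ := if s then 1 else -1

/-- The spin-vector weight `w(σ^v, σ^e)` of a pair of vertex and midpoint spin
configurations on `H_n`, with half-edge constants `ε_a, ε_b, ε_c ∈ ℂ`. -/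
noncomputable def spinWt (n : ℕ) [NeZero n] (ε : EType → ℂ)
    (σv : VF n → Bool) (σe : ConfF n) : ℂ :=
  ∏ v : VF n, ∏ s : EType, (1 + ε s * cspin (σv v) * cspin (σe (edgeAt v s)))

/-- The two-edge correlation `E_{μ_n}[σ(e)σ(f)]` of the 1-2 model on `H_n`. -/
noncomputable def corrFin (n : ℕ) [NeZero n] (a b c : ℝ) (e f : EF n) : ℝ :=
  (∑ σ : ConfF n,
      (if σ e then (1 : ℝ) else -1) * (if σ f then (1 : ℝ) else -1) *
        confWt n a b c σ) / Zn n a b c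

/-- The Ising-type weight `W(σ^v) = ∏_g (1 + ε_g² σ^v_u σ^v_v)` on vertex spins. -/
noncomputable def isingWt (n : ℕ) [NeZero n] (ε : EType → ℂ)
    (σv : VF n → Bool) : ℂ :=
  ∏ g : EF n, (1 + (ε g.1) ^ 2 * cspin (σv (ends g).1) * cspin (σv (ends g).2))

/-- The factor `D_{e,f}(σ^v)` in the two-edge correlation formula. -/
noncomputable def Dfactor (n : ℕ) [NeZero n] (ε : EType → ℂ) (e f : EF n)
    (σv : VF n → Bool) : ℂ :=
  ε e.1 * (cspin (σv (ends e).1) + cspin (σv (ends e).2)) *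
    ε f.1 * (cspin (σv (ends f).1) + cspin (σv (ends f).2)) /
      ((1 + (ε e.1) ^ 2) * (1 + (ε f.1) ^ 2))

/-!
Attach a spin `σᵛ` to every vertex and consider the joint weight
`spinWt σᵛ σᵉ = ∏_v ∏_s (1 + ε_s σᵛ_v σᵉ_{s(v)})`. Summing out the spin at one vertex leaves
`2 (1 + ∑ ε_s ε_t σᵉ_s σᵉ_t)`, which the relations `ε_b ε_c = A`, `ε_a ε_c = B`, `ε_a ε_b = C`
turn into `8 / (a + b + c)` times the 1-2 vertex weight; so the vertex sum of `spinWt` is the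
1-2 model weight of `σᵉ`, up to a constant. Grouping the factors of `spinWt` by edges instead,
an edge `uv` with spin `t` contributes `(1 + ε σᵛ_u t)(1 + ε σᵛ_v t)`, whose sum over `t` is
`2 (1 + ε² σᵛ_u σᵛ_v)`, and whose sum against `t` is `2 ε (σᵛ_u + σᵛ_v)`. Exchanging the two
summations expresses the numerator and the denominator of the correlation through the
Ising-type weight, with the same constant.
-/

lemma EType.prod_univ {M : Type*} [CommMonoid M] (h : EType → M) :
    ∏ s : EType, h s = h .a * h .b * h .c := by
  rw [show (Finset.univ : Finset EType) = {.a, .b, .c} from rfl]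
  simp [mul_assoc]

lemma edgeAt_fst {α : Type} [Sub α] [One α] (v : HexVtx α) (s : EType) :
    (edgeAt v s).1 = s := by
  cases s <;> simp only [edgeAt] <;> split_ifs <;> rfl

lemma edgeAt_ends_fst {α : Type} [AddGroupWithOne α] (g : HexEdge α) :
    edgeAt (ends g).1 g.1 = g := by
  obtain ⟨s, x, y⟩ := g
  cases s <;> simp [ends, edgeAt]

lemma edgeAt_ends_snd {α : Type} [AddGroupWithOne α] (g : HexEdge α) :
    edgeAt (ends g).2 g.1 = g := by
  obtain ⟨s, x, y⟩ := g
  cases s <;> simp [ends, edgeAt]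

/-- Half-edges, seen either as an edge with one of its two ends or as a vertex with one of its
three incident edges. -/
def halfEdgeEquiv (α : Type) [AddGroupWithOne α] : HexEdge α × Bool ≃ HexVtx α × EType where
  toFun q := (if q.2 then (ends q.1).2 else (ends q.1).1, q.1.1)
  invFun p := (edgeAt p.1 p.2, if p.2 = .a then p.1.2 else !p.1.2)
  left_inv := by
    rintro ⟨⟨s, x, y⟩, i⟩
    cases s <;> cases i <;> simp [ends, edgeAt]
  right_inv := by
    rintro ⟨⟨⟨x, y⟩, i⟩, s⟩
    cases s <;> cases i <;> simp [ends, edgeAt]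

lemma sum_bool_prod_one_add_cspin_mul (ε t : EType → ℂ) :
    ∑ x : Bool, ∏ s : EType, (1 + ε s * cspin x * t s) =
      2 * (1 + ε .a * ε .b * (t .a * t .b) + ε .a * ε .c * (t .a * t .c) +
        ε .b * ε .c * (t .b * t .c)) := by
  simp only [Fintype.sum_bool, EType.prod_univ, cspin]
  norm_num
  ring

lemma four_mul_vWt (a b c : ℝ) (sa sb sc : Bool) :
    4 * (vWt a b c sa sb sc : ℂ) = a + b + c + (c - a - b) * (cspin sa * cspin sb) +
      (b - a - c) * (cspin sa * cspin sc) + (a - b - c) * (cspin sb * cspin sc) := by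
  cases sa <;> cases sb <;> cases sc <;> norm_num [vWt, cspin] <;> ring

lemma sum_vertexSpin_eq_vWt (a b c : ℝ) (ε : EType → ℂ)
    (hbc : (a + b + c) * (ε .b * ε .c) = a - b - c)
    (hac : (a + b + c) * (ε .a * ε .c) = b - a - c)
    (hab : (a + b + c) * (ε .a * ε .b) = c - a - b) (t : EType → Bool) :
    (a + b + c) * ∑ x : Bool, ∏ s : EType, (1 + ε s * cspin x * cspin (t s)) =
      8 * (vWt a b c (t .a) (t .b) (t .c) : ℂ) := by
  rw [sum_bool_prod_one_add_cspin_mul ε fun s => cspin (t s)]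
  linear_combination (2 * (cspin (t .a) * cspin (t .b))) * hab +
    (2 * (cspin (t .a) * cspin (t .c))) * hac + (2 * (cspin (t .b) * cspin (t .c))) * hbc -
    2 * four_mul_vWt a b c (t .a) (t .b) (t .c)

lemma sum_vertexSpins_spinWt (n : ℕ) [NeZero n] (a b c : ℝ) (ε : EType → ℂ)
    (hbc : (a + b + c) * (ε .b * ε .c) = a - b - c)
    (hac : (a + b + c) * (ε .a * ε .c) = b - a - c)
    (hab : (a + b + c) * (ε .a * ε .b) = c - a - b) (σe : ConfF n) :
    ((a : ℂ) + b + c) ^ Fintype.card (VF n) * ∑ σv : VF n → Bool, spinWt n ε σv σe =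
      8 ^ Fintype.card (VF n) * (confWt n a b c σe : ℂ) := by
  simp only [spinWt, confWt]
  rw [← Fintype.prod_sum fun v x => ∏ s : EType, (1 + ε s * cspin x * cspin (σe (edgeAt v s))),
    Complex.ofReal_prod, ← Finset.card_univ, ← Finset.prod_const, ← Finset.prod_const,
    ← Finset.prod_mul_distrib, ← Finset.prod_mul_distrib]
  exact Finset.prod_congr rfl fun v _ =>
    sum_vertexSpin_eq_vWt a b c ε hbc hac hab fun s => σe (edgeAt v s)

lemma spinWt_eq_prod_edges (n : ℕ) [NeZero n] (ε : EType → ℂ) (σv : VF n → Bool)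
    (σe : ConfF n) :
    spinWt n ε σv σe = ∏ g : EF n,
      (1 + ε g.1 * cspin (σv (ends g).1) * cspin (σe g)) *
        (1 + ε g.1 * cspin (σv (ends g).2) * cspin (σe g)) := by
  let F : VF n × EType → ℂ := fun p => 1 + ε p.2 * cspin (σv p.1) * cspin (σe (edgeAt p.1 p.2))
  calc spinWt n ε σv σe = ∏ p, F p := (Fintype.prod_prod_type' _).symm
    _ = ∏ q, F (halfEdgeEquiv (ZMod n) q) := ((halfEdgeEquiv (ZMod n)).prod_comp F).symm
    _ = _ := by
      rw [Fintype.prod_prod_type]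
      simp only [F, halfEdgeEquiv, Equiv.coe_fn_mk, Fintype.prod_bool, if_true,
        Bool.false_eq_true, if_false, edgeAt_ends_fst, edgeAt_ends_snd]
      exact Fintype.prod_congr _ _ fun g => mul_comm _ _

lemma sum_prod_cspin_mul_prod {ι : Type*} [Fintype ι] [DecidableEq ι] (S : Finset ι)
    (F : ι → Bool → ℂ) :
    ∑ σ : ι → Bool, (∏ i ∈ S, cspin (σ i)) * ∏ i, F i (σ i) =
      ∏ i, ∑ t : Bool, (if i ∈ S then cspin t else 1) * F i t := by
  rw [Fintype.prod_sum]
  refine Fintype.sum_congr _ _ fun σ => ?_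
  rw [Finset.prod_mul_distrib, Finset.prod_ite_mem, Finset.univ_inter]

lemma sum_bool_edge_factor (ε x y : ℂ) :
    ∑ t : Bool, (1 + ε * x * cspin t) * (1 + ε * y * cspin t) = 2 * (1 + ε ^ 2 * x * y) := by
  simp only [Fintype.sum_bool, cspin]
  norm_num
  ring

lemma sum_bool_cspin_mul_edge_factor (ε x y : ℂ) :
    ∑ t : Bool, cspin t * ((1 + ε * x * cspin t) * (1 + ε * y * cspin t)) =
      2 * (ε * (x + y)) := by
  simp only [Fintype.sum_bool, cspin]
  norm_num
  ring

lemma sum_bool_cspin_mul_edge_factor_cspin (ε : ℂ) (hε : 1 + ε ^ 2 ≠ 0) (x y : Bool) :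
    ∑ t : Bool, cspin t * ((1 + ε * cspin x * cspin t) * (1 + ε * cspin y * cspin t)) =
      2 * (ε * (cspin x + cspin y) / (1 + ε ^ 2)) * (1 + ε ^ 2 * cspin x * cspin y) := by
  rw [sum_bool_cspin_mul_edge_factor]
  -- `cspin x + cspin y` vanishes unless `x = y`, and then `cspin x * cspin y = 1`
  cases x <;> cases y <;> norm_num [cspin] <;> field_simp

noncomputable def edgeFactor (n : ℕ) (ε : EType → ℂ) (σv : VF n → Bool) (g : EF n) : ℂ :=
  ε g.1 * (cspin (σv (ends g).1) + cspin (σv (ends g).2)) / (1 + ε g.1 ^ 2)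

lemma sum_edgeSpins_spinWt (n : ℕ) [NeZero n] (ε : EType → ℂ) (S : Finset (EF n))
    (hS : ∀ g ∈ S, 1 + ε g.1 ^ 2 ≠ 0) (σv : VF n → Bool) :
    ∑ σe : ConfF n, (∏ g ∈ S, cspin (σe g)) * spinWt n ε σv σe =
      2 ^ Fintype.card (EF n) * (∏ g ∈ S, edgeFactor n ε σv g) * isingWt n ε σv := by
  have h_edge (g : EF n) :
      ∑ t : Bool, (if g ∈ S then cspin t else 1) *
        ((1 + ε g.1 * cspin (σv (ends g).1) * cspin t) *
          (1 + ε g.1 * cspin (σv (ends g).2) * cspin t)) =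
      2 * ((if g ∈ S then edgeFactor n ε σv g else 1) *
        (1 + ε g.1 ^ 2 * cspin (σv (ends g).1) * cspin (σv (ends g).2))) := by
    split_ifs with hg
    · rw [sum_bool_cspin_mul_edge_factor_cspin _ (hS g hg), edgeFactor, mul_assoc]
    · simp only [one_mul]
      exact sum_bool_edge_factor ..
  simp only [spinWt_eq_prod_edges]
  rw [sum_prod_cspin_mul_prod S fun g t => (1 + ε g.1 * cspin (σv (ends g).1) * cspin t) *
      (1 + ε g.1 * cspin (σv (ends g).2) * cspin t), Fintype.prod_congr _ _ h_edge,
    Finset.prod_mul_distrib, Finset.prod_mul_distrib, Finset.prod_const, Finset.card_univ,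
    Finset.prod_ite_mem, Finset.univ_inter, isingWt, mul_assoc]

lemma sum_prod_edgeFactor_mul_isingWt (n : ℕ) [NeZero n] (a b c : ℝ) (ε : EType → ℂ)
    (hbc : (a + b + c) * (ε .b * ε .c) = a - b - c)
    (hac : (a + b + c) * (ε .a * ε .c) = b - a - c)
    (hab : (a + b + c) * (ε .a * ε .b) = c - a - b)
    (S : Finset (EF n)) (hS : ∀ g ∈ S, 1 + ε g.1 ^ 2 ≠ 0) :
    ((a : ℂ) + b + c) ^ Fintype.card (VF n) * 2 ^ Fintype.card (EF n) *
        ∑ σv : VF n → Bool, (∏ g ∈ S, edgeFactor n ε σv g) * isingWt n ε σv =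
      8 ^ Fintype.card (VF n) *
        ∑ σe : ConfF n, (∏ g ∈ S, cspin (σe g)) * (confWt n a b c σe : ℂ) := by
  calc _ = ((a : ℂ) + b + c) ^ Fintype.card (VF n) * ∑ σv : VF n → Bool, ∑ σe : ConfF n,
        (∏ g ∈ S, cspin (σe g)) * spinWt n ε σv σe := by
        simp only [sum_edgeSpins_spinWt n ε S hS, Finset.mul_sum, mul_assoc]
    _ = ∑ σe : ConfF n, (∏ g ∈ S, cspin (σe g)) *
        (((a : ℂ) + b + c) ^ Fintype.card (VF n) * ∑ σv : VF n → Bool, spinWt n ε σv σe) := by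
        rw [Finset.sum_comm]
        simp only [Finset.mul_sum, mul_left_comm]
    _ = _ := by
        simp only [sum_vertexSpins_spinWt n a b c ε hbc hac hab, Finset.mul_sum, mul_left_comm]

lemma vWt_nonneg {a b c : ℝ} (ha : 0 ≤ a) (hb : 0 ≤ b) (hc : 0 ≤ c) (sa sb sc : Bool) :
    0 ≤ vWt a b c sa sb sc := by
  unfold vWt
  split_ifs <;> first | assumption | exact le_rfl

lemma Zn_pos (n : ℕ) [NeZero n] {a b c : ℝ} (ha : 0 < a) (hb : 0 ≤ b) (hc : 0 ≤ c) :
    0 < Zn n a b c := by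
  refine Finset.sum_pos' (fun σ _ => Finset.prod_nonneg fun v _ =>
    vWt_nonneg ha.le hb hc _ _ _) ⟨fun g => g.1 = .a, Finset.mem_univ _, ?_⟩
  -- spin `+1` exactly on the `a`-edges gives every vertex the weight `a`
  exact Finset.prod_pos fun v _ => by simp [edgeAt_fst, vWt, ha]

lemma Dfactor_eq_edgeFactor_mul (n : ℕ) [NeZero n] (ε : EType → ℂ) (e f : EF n)
    (σv : VF n → Bool) : Dfactor n ε e f σv = edgeFactor n ε σv e * edgeFactor n ε σv f := by
  rw [Dfactor, edgeFactor, edgeFactor, div_mul_div_comm]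
  ring

lemma corrFin_mul_Zn (n : ℕ) [NeZero n] {a b c : ℝ} (hZ : Zn n a b c ≠ 0) (e f : EF n) :
    (corrFin n a b c e f : ℂ) * Zn n a b c =
      ∑ σ : ConfF n, cspin (σ e) * cspin (σ f) * confWt n a b c σ := by
  rw [← Complex.ofReal_mul, corrFin, div_mul_cancel₀ _ hZ]
  push_cast
  refine Fintype.sum_congr _ _ fun σ => ?_
  cases σ e <;> cases σ f <;> simp [cspin]

theorem two_edge_correlation_formula_general
    (n : ℕ) [NeZero n] (a b c : ℝ) (ha : 0 < a) (hb : 0 < b) (hc : 0 < c)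
    (A B C : ℝ)
    (hA : A = (a - b - c) / (a + b + c))
    (hB : B = (b - a - c) / (a + b + c))
    (hC : C = (c - a - b) / (a + b + c))
    (ε : EType → ℂ)
    (hbc : ε .b * ε .c = (A : ℂ))
    (hac : ε .a * ε .c = (B : ℂ))
    (hab : ε .a * ε .b = (C : ℂ))
    (e f : EF n) (hef : e ≠ f)
    (he : 1 + (ε e.1) ^ 2 ≠ 0) (hf : 1 + (ε f.1) ^ 2 ≠ 0) :
    (∑ σv : VF n → Bool, isingWt n ε σv) ≠ 0 ∧
      ((corrFin n a b c e f : ℝ) : ℂ) =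
        (∑ σv : VF n → Bool, Dfactor n ε e f σv * isingWt n ε σv) /
          (∑ σv : VF n → Bool, isingWt n ε σv) := by
  have hs : (a : ℂ) + b + c ≠ 0 := by exact_mod_cast (by positivity : a + b + c ≠ 0)
  subst hA hB hC
  push_cast at hbc hac hab
  rw [eq_div_iff hs, mul_comm] at hbc hac hab
  have hZ : Zn n a b c ≠ 0 := (Zn_pos n ha hb.le hc.le).ne'
  have hW := sum_prod_edgeFactor_mul_isingWt n a b c ε hbc hac hab ∅ (by simp)
  have hDW := sum_prod_edgeFactor_mul_isingWt n a b c ε hbc hac hab {e, f} (by simp [he, hf])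
  simp only [Finset.prod_empty, one_mul, ← Complex.ofReal_sum, ← Zn.eq_1] at hW
  simp only [Finset.prod_pair hef, ← Dfactor_eq_edgeFactor_mul] at hDW
  have hK : ((a : ℂ) + b + c) ^ Fintype.card (VF n) * 2 ^ Fintype.card (EF n) ≠ 0 :=
    mul_ne_zero (pow_ne_zero _ hs) (pow_ne_zero _ two_ne_zero)
  have hW0 : ∑ σv : VF n → Bool, isingWt n ε σv ≠ 0 := fun h => by
    rw [h, mul_zero, eq_comm] at hW
    exact hZ (by simpa using hW)
  refine ⟨hW0, ?_⟩
  rw [eq_div_iff hW0]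
  refine mul_left_cancel₀ hK ?_
  linear_combination (corrFin n a b c e f : ℂ) * hW - hDW +
    (8 : ℂ) ^ Fintype.card (VF n) * corrFin_mul_Zn n hZ e f

/-- two-edge correlation formula. The 1-2 model two-edge
correlation is a ratio of Ising-type sums over vertex spin configurations. -/
theorem two_edge_correlation_formula
    (n : ℕ) [NeZero n] (a b c : ℝ) (ha : 0 < a) (hb : 0 < b) (hc : 0 < c)
    (A B C : ℝ)
    (hA : A = (a - b - c) / (a + b + c))
    (hB : B = (b - a - c) / (a + b + c))
    (hC : C = (c - a - b) / (a + b + c))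
    (hABC : A * B * C ≠ 0)
    (ε : EType → ℂ)
    (hbc : ε .b * ε .c = (A : ℂ))
    (hac : ε .a * ε .c = (B : ℂ))
    (hab : ε .a * ε .b = (C : ℂ))
    (e f : EF n) (hef : e ≠ f)
    (he : 1 + (ε e.1) ^ 2 ≠ 0) (hf : 1 + (ε f.1) ^ 2 ≠ 0) :
    (∑ σv : VF n → Bool, isingWt n ε σv) ≠ 0 ∧
      ((corrFin n a b c e f : ℝ) : ℂ) =
        (∑ σv : VF n → Bool, Dfactor n ε e f σv * isingWt n ε σv) /
          (∑ σv : VF n → Bool, isingWt n ε σv) :=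
  two_edge_correlation_formula_general n a b c ha hb hc A B C hA hB hC ε hbc hac hab e f hef he hf
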